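/- Let z₁, …, z_n be distinct points in the unit disc, w₁ = … = w_n = 0 except w_n arbitrary with |w_n| ≤ ∏_{j=1}^{n−1} ρ(z_j, z_n). Then there exists an analytic self-map f of the disc with f(z_j) = w_j for all j, and any such f has the form f(z) = (∏_{j=1}^{n−1}[z, z_j])·h(z) with h an analytic self-map of D. -/

import Mathlib

open Complex Set ComplexConjugate

noncomputable section

/-- The open unit disc in ℂ. -/
def unitDisc : Set ℂ := {z : ℂ | ‖z‖ < 1}

/-- Pseudohyperbolic distance ρ(a,b) = |(a-b)/(1 - conj b · a)|. -/
def pd (a b : ℂ) : ℝ := ‖(a - b) / (1 - conj b * a)‖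

/-- Hyperbolic distance β = log((1+ρ)/(1-ρ)). -/
def hd (a b : ℂ) : ℝ := Real.log ((1 + pd a b) / (1 - pd a b))

/-- The complex pseudohyperbolic "bracket" [a,b] = (b-a)/(1 - conj b · a). -/
def hbr (a b : ℂ) : ℂ := (b - a) / (1 - conj b * a)

/-- f is an analytic self-map of the unit disc. -/
def IsSelfMap (f : ℂ → ℂ) : Prop :=
  DifferentiableOn ℂ f unitDisc ∧ Set.MapsTo f unitDisc unitDisc

/-- Hyperbolic derivative f^h(z) = (1-|z|²) f'(z) / (1-|f z|²). -/
def hypDeriv (f : ℂ → ℂ) (z : ℂ) : ℂ :=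
  (1 - (‖z‖ : ℂ) ^ 2) * deriv f z / (1 - (‖f z‖ : ℂ) ^ 2)

/-- f ∈ 𝒰: analytic on the disc with modulus at most 1. -/
def MemU (f : ℂ → ℂ) : Prop :=
  DifferentiableOn ℂ f unitDisc ∧ ∀ z ∈ unitDisc, ‖f z‖ ≤ 1

/-!
Existence: the finite Blaschke product `B(ζ) = ∏ [ζ, z_j]` vanishes at the prescribed zeros and
`|B(z_n)| = ∏ ρ(z_j, z_n) ≥ |w_n|`, so a constant multiple `c · B` with `|c| ≤ 1` interpolates.
Factorization: each zero `a` is divided off by conjugating with the Möbius involution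
`ζ ↦ [ζ, a]`, which moves it to `0`, and applying Schwarz's lemma; distinctness of the zeros
lets the quotient keep the remaining ones.
-/

lemma unitDisc_eq_ball : unitDisc = Metric.ball (0 : ℂ) 1 := by
  ext z; simp [unitDisc]

lemma one_sub_conj_mul_ne_zero {a b : ℂ} (ha : ‖a‖ < 1) (hb : ‖b‖ ≤ 1) :
    1 - conj a * b ≠ 0 := by
  have hlt : ‖conj a * b‖ < 1 := by
    rw [norm_mul, Complex.norm_conj]
    nlinarith [norm_nonneg a, norm_nonneg b]
  intro h
  rw [← sub_eq_zero.mp h, norm_one] at hlt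
  exact hlt.false

lemma normSq_one_sub_conj_mul (a b : ℂ) :
    normSq (1 - conj a * b) = normSq (a - b) + (1 - normSq a) * (1 - normSq b) := by
  simp only [normSq_apply, sub_re, sub_im, mul_re, mul_im, conj_re, conj_im, one_re, one_im]
  ring

lemma norm_hbr_lt_one {a b : ℂ} (ha : a ∈ unitDisc) (hb : b ∈ unitDisc) :
    ‖hbr a b‖ < 1 := by
  have hden := one_sub_conj_mul_ne_zero hb ha.le
  have hnormSq : ∀ {x : ℂ}, x ∈ unitDisc → normSq x < 1 := fun hx => by
    rw [normSq_eq_norm_sq]; exact pow_lt_one₀ (norm_nonneg _) hx two_ne_zero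
  rw [hbr, norm_div, div_lt_one (norm_pos_iff.mpr hden),
    ← sq_lt_sq₀ (norm_nonneg _) (norm_nonneg _), ← normSq_eq_norm_sq, ← normSq_eq_norm_sq,
    normSq_one_sub_conj_mul, lt_add_iff_pos_right]
  exact mul_pos (sub_pos.mpr (hnormSq hb)) (sub_pos.mpr (hnormSq ha))

lemma norm_hbr_eq_pd (a b : ℂ) : ‖hbr a b‖ = pd b a := by
  have hden : 1 - conj b * a = conj (1 - conj a * b) := by simp [mul_comm]
  rw [hbr, pd, norm_div, norm_div, hden, Complex.norm_conj]

lemma hbr_self (a : ℂ) : hbr a a = 0 := by simp [hbr]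

lemma hbr_ne_zero {a b : ℂ} (hb : b ∈ unitDisc) (ha : ‖a‖ ≤ 1) (hab : a ≠ b) :
    hbr a b ≠ 0 :=
  div_ne_zero (sub_ne_zero.mpr hab.symm) (one_sub_conj_mul_ne_zero hb ha)

lemma hbr_hbr {a ζ : ℂ} (ha : a ∈ unitDisc) (hζ : 1 - conj a * ζ ≠ 0) :
    hbr (hbr ζ a) a = ζ := by
  have haa := one_sub_conj_mul_ne_zero ha ha.le
  have hnum : a - hbr ζ a = ζ * (1 - conj a * a) / (1 - conj a * ζ) := by
    rw [hbr, eq_div_iff hζ, sub_mul, div_mul_cancel₀ _ hζ]; ring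
  have hden : 1 - conj a * hbr ζ a = (1 - conj a * a) / (1 - conj a * ζ) := by
    rw [hbr, eq_div_iff hζ, sub_mul, mul_div_assoc', div_mul_cancel₀ _ hζ]; ring
  rw [hbr, hnum, hden, div_div_div_cancel_right₀ hζ, mul_div_cancel_right₀ ζ haa]

lemma differentiableOn_hbr {a : ℂ} (ha : a ∈ unitDisc) :
    DifferentiableOn ℂ (fun ζ => hbr ζ a) unitDisc :=
  ((differentiableOn_const a).sub differentiableOn_id).div
    ((differentiableOn_const 1).sub (differentiableOn_id.const_mul _))
    fun _ hζ => one_sub_conj_mul_ne_zero ha (le_of_lt hζ)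

lemma mapsTo_hbr {a : ℂ} (ha : a ∈ unitDisc) :
    MapsTo (fun ζ => hbr ζ a) unitDisc unitDisc :=
  fun _ hζ => norm_hbr_lt_one hζ ha

lemma MemU.comp {f φ : ℂ → ℂ} (hf : MemU f) (hφ : DifferentiableOn ℂ φ unitDisc)
    (hφD : MapsTo φ unitDisc unitDisc) : MemU (f ∘ φ) :=
  ⟨hf.1.comp hφ hφD, fun _ hζ => hf.2 _ (hφD hζ)⟩

/-- Schwarz's lemma: `g ζ = ζ · dslope g 0 ζ`, and the quotient stays in `𝒰`. -/
lemma MemU.dslope_zero {g : ℂ → ℂ} (hg : MemU g) (hg0 : g 0 = 0) : MemU (dslope g 0) := by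
  have hD : unitDisc ∈ nhds (0 : ℂ) := unitDisc_eq_ball ▸ Metric.ball_mem_nhds 0 one_pos
  obtain ⟨hgd, hgb⟩ := hg
  refine ⟨(differentiableOn_dslope hD).mpr hgd, fun ζ hζ => ?_⟩
  rw [unitDisc_eq_ball] at hζ hgd hgb
  have hmaps : MapsTo g (Metric.ball 0 1) (Metric.closedBall (g 0) 1) := fun x hx => by
    simpa [hg0] using hgb x hx
  simpa using norm_dslope_le_div_of_mapsTo_ball hgd hmaps hζ

/-- Conjugating by the involution `ζ ↦ [ζ, a]`, which swaps `a` and `0`, reduces this to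
Schwarz's lemma. -/
lemma MemU.exists_hbr_mul {f : ℂ → ℂ} (hf : MemU f) {a : ℂ} (ha : a ∈ unitDisc)
    (hfa : f a = 0) : ∃ h : ℂ → ℂ, MemU h ∧ ∀ ζ ∈ unitDisc, f ζ = hbr ζ a * h ζ := by
  set φ : ℂ → ℂ := fun ζ => hbr ζ a
  have hφ0 : φ 0 = a := by simp [φ, hbr]
  have hg := hf.comp (differentiableOn_hbr ha) (mapsTo_hbr ha)
  have hg0 : (f ∘ φ) 0 = 0 := by simp [hφ0, hfa]
  refine ⟨dslope (f ∘ φ) 0 ∘ φ, (hg.dslope_zero hg0).comp (differentiableOn_hbr ha)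
    (mapsTo_hbr ha), fun ζ hζ => ?_⟩
  have hφφ : φ (φ ζ) = ζ := hbr_hbr ha (one_sub_conj_mul_ne_zero ha hζ.le)
  have := sub_smul_dslope (f ∘ φ) 0 (φ ζ)
  rw [hg0, sub_zero, sub_zero, smul_eq_mul, Function.comp_apply, hφφ] at this
  exact this.symm

lemma MemU.exists_prod_hbr_mul {ι : Type*} {f : ℂ → ℂ} (hf : MemU f) (S : Finset ι)
    {z : ι → ℂ} (hz : ∀ j ∈ S, z j ∈ unitDisc) (hinj : InjOn z S)
    (hfz : ∀ j ∈ S, f (z j) = 0) :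
    ∃ h : ℂ → ℂ, MemU h ∧ ∀ ζ ∈ unitDisc, f ζ = (∏ j ∈ S, hbr ζ (z j)) * h ζ := by
  classical
  induction S using Finset.induction_on generalizing f with
  | empty => exact ⟨f, hf, fun ζ _ => by simp⟩
  | @insert a s has ih =>
    simp only [Finset.mem_insert, forall_eq_or_imp, Finset.coe_insert, injOn_insert has]
      at hz hfz hinj
    obtain ⟨h₁, hh₁, hfh₁⟩ := hf.exists_hbr_mul hz.1 hfz.1
    have hh₁z : ∀ j ∈ s, h₁ (z j) = 0 := fun j hj => by
      have hne : z j ≠ z a := fun he => hinj.2 (he ▸ mem_image_of_mem z hj)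
      have := hfh₁ (z j) (hz.2 j hj)
      rw [hfz.2 j hj, eq_comm] at this
      exact (mul_eq_zero.mp this).resolve_left (hbr_ne_zero hz.1 (hz.2 j hj).le hne)
    obtain ⟨h, hh, hh₁h⟩ := ih hh₁ hz.2 hinj.1 hh₁z
    exact ⟨h, hh, fun ζ hζ => by
      rw [Finset.prod_insert has, hfh₁ ζ hζ, hh₁h ζ hζ, mul_assoc]⟩

lemma exists_norm_le_one_mul_eq {a b : ℂ} (h : ‖a‖ ≤ ‖b‖) : ∃ c : ℂ, ‖c‖ ≤ 1 ∧ c * b = a := by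
  refine ⟨a / b, by rw [norm_div]; exact div_le_one_of_le₀ h (norm_nonneg b), ?_⟩
  rcases eq_or_ne b 0 with rfl | hb
  · simpa using (norm_le_zero_iff.mp (by simpa using h)).symm
  · exact div_mul_cancel₀ a hb

lemma memU_const_mul_prod_hbr {ι : Type*} (S : Finset ι) {z : ι → ℂ}
    (hz : ∀ j ∈ S, z j ∈ unitDisc) {c : ℂ} (hc : ‖c‖ ≤ 1) :
    MemU fun ζ => c * ∏ j ∈ S, hbr ζ (z j) := by
  refine ⟨(DifferentiableOn.fun_finsetProd fun j hj => differentiableOn_hbr (hz j hj)).const_mul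
    c, fun ζ hζ => ?_⟩
  rw [norm_mul, norm_prod]
  exact mul_le_one₀ hc (Finset.prod_nonneg fun _ _ => norm_nonneg _)
    (Finset.prod_le_one (fun _ _ => norm_nonneg _) fun j hj => (norm_hbr_lt_one hζ (hz j hj)).le)

/-- The witness is `c · ∏ [ζ, z j]` with `c = w / ∏ [ξ, z j]`. -/
lemma exists_memU_apply_eq {ι : Type*} (S : Finset ι) {z : ι → ℂ}
    (hz : ∀ j ∈ S, z j ∈ unitDisc) {ξ w : ℂ} (hw : ‖w‖ ≤ ∏ j ∈ S, pd (z j) ξ) :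
    ∃ f : ℂ → ℂ, MemU f ∧ f ξ = w ∧ ∀ j ∈ S, f (z j) = 0 := by
  have hprod : ‖∏ j ∈ S, hbr ξ (z j)‖ = ∏ j ∈ S, pd (z j) ξ := by
    simp only [norm_prod, norm_hbr_eq_pd]
  obtain ⟨c, hc, hcw⟩ := exists_norm_le_one_mul_eq (hprod ▸ hw)
  exact ⟨_, memU_const_mul_prod_hbr S hz hc, hcw,
    fun j hj => by
      simp only [Finset.prod_eq_zero (f := fun i => hbr (z j) (z i)) hj (hbr_self _), mul_zero]⟩

theorem interpolation_with_zeros_general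
    (n : ℕ) (z w : ℕ → ℂ)
    (hzD : ∀ j, 1 ≤ j → j ≤ n → z j ∈ unitDisc)
    (hdist : ∀ i j, 1 ≤ i → i ≤ n → 1 ≤ j → j ≤ n → i ≠ j → z i ≠ z j)
    (hw0 : ∀ j, 1 ≤ j → j ≤ n - 1 → w j = 0)
    (hwn : ‖w n‖ ≤ ∏ j ∈ Finset.Icc 1 (n - 1), pd (z j) (z n)) :
    (∃ f : ℂ → ℂ, MemU f ∧ ∀ j, 1 ≤ j → j ≤ n → f (z j) = w j) ∧
    (∀ f : ℂ → ℂ, MemU f → (∀ j, 1 ≤ j → j ≤ n → f (z j) = w j) →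
      ∃ h : ℂ → ℂ, MemU h ∧
        ∀ ζ ∈ unitDisc, f ζ = (∏ j ∈ Finset.Icc 1 (n - 1), hbr ζ (z j)) * h ζ) := by
  have hzS : ∀ j ∈ Finset.Icc 1 (n - 1), z j ∈ unitDisc := fun j hj => by
    obtain ⟨h1, h2⟩ := Finset.mem_Icc.mp hj; exact hzD j h1 (by omega)
  have hwS : ∀ j ∈ Finset.Icc 1 (n - 1), w j = 0 := fun j hj => by
    obtain ⟨h1, h2⟩ := Finset.mem_Icc.mp hj; exact hw0 j h1 h2
  refine ⟨?_, fun f hf hfz => hf.exists_prod_hbr_mul _ hzS ?_ fun j hj => ?_⟩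
  · obtain ⟨f, hf, hfn, hfS⟩ := exists_memU_apply_eq _ hzS hwn
    refine ⟨f, hf, fun j hj1 hjn => ?_⟩
    rcases hjn.eq_or_lt with rfl | hlt
    · exact hfn
    · have hj : j ∈ Finset.Icc 1 (n - 1) := Finset.mem_Icc.mpr ⟨hj1, by omega⟩
      rw [hfS j hj, hwS j hj]
  · intro i hi j hj hzij
    simp only [Finset.coe_Icc, mem_Icc] at hi hj
    by_contra hij
    exact hdist i j hi.1 (by omega) hj.1 (by omega) hij hzij
  · obtain ⟨h1, h2⟩ := Finset.mem_Icc.mp hj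
    rw [hfz j h1 (by omega), hwS j hj]

theorem interpolation_with_zeros
    (n : ℕ) (hn : 2 ≤ n) (z w : ℕ → ℂ)
    (hzD : ∀ j, 1 ≤ j → j ≤ n → z j ∈ unitDisc)
    (hdist : ∀ i j, 1 ≤ i → i ≤ n → 1 ≤ j → j ≤ n → i ≠ j → z i ≠ z j)
    (hw0 : ∀ j, 1 ≤ j → j ≤ n - 1 → w j = 0)
    (hwn : ‖w n‖ ≤ ∏ j ∈ Finset.Icc 1 (n - 1), pd (z j) (z n)) :
    (∃ f : ℂ → ℂ, MemU f ∧ ∀ j, 1 ≤ j → j ≤ n → f (z j) = w j) ∧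
    (∀ f : ℂ → ℂ, MemU f → (∀ j, 1 ≤ j → j ≤ n → f (z j) = w j) →
      ∃ h : ℂ → ℂ, MemU h ∧
        ∀ ζ ∈ unitDisc, f ζ = (∏ j ∈ Finset.Icc 1 (n - 1), hbr ζ (z j)) * h ζ) :=
  interpolation_with_zeros_general n z w hzD hdist hw0 hwn
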